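/- Let T be an (n+1)×(n+1) Hermitian PSD Toeplitz matrix of rank r ≤ n. Then there exist r distinct unimodular complex numbers z₁,…,z_r and positive reals p₁,…,p_r such that T_{jk} = Σ_l p_l z_l^{j−k} for all 0 ≤ j,k ≤ n (Carathéodory–Fejér decomposition T = A P Aᴴ with Vandermonde A_{jl} = z_l^j and P = diag(p)). -/

import Mathlib

/-!
Factor `T` as the Gram matrix of vectors `b₀, …, bₙ`. The Toeplitz property says that
`(b₀, …, bₙ₋₁)` and `(b₁, …, bₙ)` have the same Gram matrix, so some linear isometry `U` maps one
family onto the other and `bⱼ = Uʲ b₀`. An isometry of a finite-dimensional complex inner product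
space is normal, hence `b₀` is a finite sum of eigenvectors `f μ` with unimodular, pairwise
distinct eigenvalues `μ`, and the eigenvectors are mutually orthogonal. Expanding
`⟪Uʲ b₀, Uᵏ b₀⟫` then gives `T = A P Aᴴ` with `z = conj μ` and `p = ‖f μ‖²`; as `A` is a
Vandermonde matrix of full column rank and `P` is positive definite, the number of nodes is the
rank of `T`.
-/

open Matrix ComplexOrder

section Isometry

variable {𝕜 E : Type*} [RCLike 𝕜] [NormedAddCommGroup E] [InnerProductSpace 𝕜 E]
  [FiniteDimensional 𝕜 E]

theorem LinearMap.exists_linearIsometry_comp_eq {V : Type*} [AddCommGroup V] [Module 𝕜 V]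
    (F G : V →ₗ[𝕜] E) (h : ∀ x, ‖F x‖ = ‖G x‖) : ∃ U : E →ₗᵢ[𝕜] E, ∀ x, U (F x) = G x := by
  have hker : LinearMap.ker F ≤ LinearMap.ker G := fun x hx => by
    rw [LinearMap.mem_ker, ← norm_eq_zero, ← h, norm_eq_zero]
    exact hx
  let L : LinearMap.range F →ₗ[𝕜] E :=
    (LinearMap.ker F).liftQ G hker ∘ₗ F.quotKerEquivRange.symm.toLinearMap
  have hL : ∀ x, L ⟨F x, LinearMap.mem_range_self F x⟩ = G x := fun x => by
    simp [L, LinearMap.quotKerEquivRange_symm_apply_image]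
  let L' : LinearMap.range F →ₗᵢ[𝕜] E :=
    ⟨L, by rintro ⟨_, x, rfl⟩; rw [hL, ← h]; rfl⟩
  exact ⟨L'.extend, fun x => (L'.extend_apply ⟨F x, _⟩).trans (hL x)⟩

theorem exists_linearIsometry_apply_eq_of_inner_eq {ι : Type*} [Fintype ι] (v w : ι → E)
    (h : ∀ i j, inner 𝕜 (v i) (v j) = inner 𝕜 (w i) (w j)) :
    ∃ U : E →ₗᵢ[𝕜] E, ∀ i, U (v i) = w i := by
  classical
  have hnorm : ∀ c, ‖Fintype.linearCombination 𝕜 v c‖ = ‖Fintype.linearCombination 𝕜 w c‖ := by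
    intro c
    rw [← sq_eq_sq₀ (norm_nonneg _) (norm_nonneg _), ← RCLike.ofReal_inj (K := 𝕜),
      RCLike.ofReal_pow, RCLike.ofReal_pow, ← inner_self_eq_norm_sq_to_K,
      ← inner_self_eq_norm_sq_to_K]
    simp only [Fintype.linearCombination_apply, sum_inner, inner_sum, inner_smul_left,
      inner_smul_right, h]
  obtain ⟨U, hU⟩ := LinearMap.exists_linearIsometry_comp_eq _ _ hnorm
  exact ⟨U, fun i => by simpa using hU (Pi.single i 1)⟩

end Isometry

namespace Module.End

variable {K V : Type*} [Field K] [AddCommGroup V] [Module K V] (A : Module.End K V)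

theorem exists_sum_hasEigenvector_of_iSup_eigenspace_eq_top (hA : ⨆ μ, eigenspace A μ = ⊤)
    (v : V) :
    ∃ (s : Finset K) (f : K → V), (∀ μ ∈ s, A.HasEigenvector μ (f μ)) ∧ ∑ μ ∈ s, f μ = v := by
  obtain ⟨f, hf, rfl⟩ := (Submodule.mem_iSup_iff_exists_finsupp _ v).mp (hA ▸ Submodule.mem_top)
  exact ⟨f.support, f, fun μ hμ => ⟨hf μ, Finsupp.mem_support_iff.mp hμ⟩, rfl⟩

theorem card_le_finrank_of_hasEigenvector [FiniteDimensional K V] (s : Finset K) (f : K → V)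
    (hf : ∀ μ ∈ s, A.HasEigenvector μ (f μ)) : s.card ≤ Module.finrank K V := by
  have hli := A.eigenvectors_linearIndependent' (fun μ : s => (μ : K)) Subtype.val_injective
    (fun μ => f μ) fun μ => hf μ μ.2
  simpa using hli.fintype_card_le_finrank

end Module.End

section Unitary

variable {E : Type*} [NormedAddCommGroup E] [InnerProductSpace ℂ E]

open Module.End

open scoped ComplexStarModule in
/-- `A = ℜ A + I • ℑ A`, and the joint eigenspaces of the commuting self-adjoint operators `ℜ A`,
`ℑ A` already span. -/
theorem LinearMap.iSup_eigenspace_eq_top_of_isStarNormal [FiniteDimensional ℂ E]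
    (A : E →ₗ[ℂ] E) [IsStarNormal A] : ⨆ μ : ℂ, eigenspace A μ = ⊤ := by
  have hsymm : ∀ B : selfAdjoint (E →ₗ[ℂ] E), (B : E →ₗ[ℂ] E).IsSymmetric := fun B =>
    (LinearMap.isSymmetric_iff_isSelfAdjoint _).mpr B.2
  rw [eq_top_iff, ← (hsymm (ℜ A)).iSup_iSup_eigenspace_inf_eigenspace_eq_top_of_commute
    (hsymm (ℑ A)) (Commute.realPart_imaginaryPart A)]
  refine iSup_le fun α => iSup_le fun β => le_iSup_of_le (α + Complex.I * β) fun x hx => ?_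
  obtain ⟨hα, hβ⟩ := Submodule.mem_inf.mp hx
  rw [mem_eigenspace_iff] at hα hβ ⊢
  conv_lhs => rw [← realPart_add_I_smul_imaginaryPart A]
  rw [LinearMap.add_apply, LinearMap.smul_apply, hα, hβ, smul_smul, add_smul]

namespace LinearIsometry

variable (U : E →ₗᵢ[ℂ] E) {μ ν : ℂ} {x y : E}

theorem isStarNormal [FiniteDimensional ℂ E] : IsStarNormal U.toLinearMap := by
  have h : star U.toLinearMap * U.toLinearMap = 1 := by
    refine LinearMap.ext fun x => ext_inner_right ℂ fun y => ?_
    rw [LinearMap.star_eq_adjoint, Module.End.mul_apply, LinearMap.adjoint_inner_left]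
    exact U.inner_map_map x y
  exact ⟨h.trans (mul_eq_one_comm.mp h).symm⟩

theorem norm_eq_one_of_mem_eigenspace (hx : x ∈ eigenspace U.toLinearMap μ) (hx0 : x ≠ 0) :
    ‖μ‖ = 1 := by
  have h := U.norm_map x
  rw [← U.coe_toLinearMap, mem_eigenspace_iff.mp hx, norm_smul] at h
  exact (mul_eq_right₀ (norm_ne_zero_iff.mpr hx0)).mp h

theorem inner_eq_zero_of_mem_eigenspace (hx : x ∈ eigenspace U.toLinearMap μ)
    (hy : y ∈ eigenspace U.toLinearMap ν) (hμν : μ ≠ ν) : inner ℂ x y = 0 := by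
  rcases eq_or_ne x 0 with rfl | hx0
  · exact inner_zero_left y
  have hμ : μ * starRingEnd ℂ μ = 1 := by
    rw [Complex.mul_conj', U.norm_eq_one_of_mem_eigenspace hx hx0]
    simp
  have h := U.inner_map_map x y
  rw [← U.coe_toLinearMap, mem_eigenspace_iff.mp hx, mem_eigenspace_iff.mp hy, inner_smul_left,
    inner_smul_right] at h
  have : (μ - ν) * inner ℂ x y = 0 := by
    linear_combination (-μ) * h + inner ℂ x y * ν * hμ
  exact (mul_eq_zero.mp this).resolve_left (sub_ne_zero.mpr hμν)

theorem inner_pow_apply_sum_eq_sum (s : Finset ℂ) (f : ℂ → E)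
    (hf : ∀ μ ∈ s, HasEigenvector U.toLinearMap μ (f μ)) (j k : ℕ) :
    inner ℂ ((U.toLinearMap ^ j) (∑ μ ∈ s, f μ)) ((U.toLinearMap ^ k) (∑ μ ∈ s, f μ)) =
      ∑ μ ∈ s, (‖f μ‖ ^ 2 : ℝ) * starRingEnd ℂ μ ^ j * μ ^ k := by
  simp only [map_sum, sum_inner, inner_sum]
  refine Finset.sum_congr rfl fun μ hμ => ?_
  rw [Finset.sum_eq_single_of_mem μ hμ fun ν hν hνμ => ?_]
  · simp only [(hf μ hμ).pow_apply, inner_smul_left, inner_smul_right,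
      inner_self_eq_norm_sq_to_K, map_pow, RCLike.ofReal_eq_complex_ofReal]
    push_cast
    ring
  · simp only [(hf μ hμ).pow_apply, (hf ν hν).pow_apply, inner_smul_left, inner_smul_right,
      U.inner_eq_zero_of_mem_eigenspace (hf ν hν).1 (hf μ hμ).1 hνμ, mul_zero]

theorem exists_inner_pow_apply_eq_sum [FiniteDimensional ℂ E] (v : E) :
    ∃ (m : ℕ) (z : Fin m → ℂ) (p : Fin m → ℝ), m ≤ Module.finrank ℂ E ∧ Function.Injective z ∧
      (∀ l, ‖z l‖ = 1) ∧ (∀ l, 0 < p l) ∧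
      ∀ j k : ℕ, inner ℂ ((U.toLinearMap ^ j) v) ((U.toLinearMap ^ k) v) =
        ∑ l, (p l : ℂ) * z l ^ j * starRingEnd ℂ (z l) ^ k := by
  have := U.isStarNormal
  obtain ⟨s, f, hf, rfl⟩ := exists_sum_hasEigenvector_of_iSup_eigenspace_eq_top _
    U.toLinearMap.iSup_eigenspace_eq_top_of_isStarNormal v
  let e := s.equivFin.symm
  refine ⟨s.card, fun l => starRingEnd ℂ (e l), fun l => ‖f (e l)‖ ^ 2,
    card_le_finrank_of_hasEigenvector _ s f hf, ?_, fun l => ?_, fun l => ?_, fun j k => ?_⟩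
  · exact (star_injective.comp Subtype.val_injective).comp e.injective
  · rw [Complex.norm_conj]
    exact U.norm_eq_one_of_mem_eigenspace (hf _ (e l).2).1 (hf _ (e l).2).2
  · exact pow_pos (norm_pos_iff.mpr (hf _ (e l).2).2) 2
  · rw [U.inner_pow_apply_sum_eq_sum s f hf, ← Finset.sum_coe_sort s, ← e.sum_comp]
    simp only [Complex.conj_conj]

end LinearIsometry

end Unitary

theorem Matrix.PosSemidef.exists_eq_gram {𝕜 n : Type*} [RCLike 𝕜] [Fintype n]
    {A : Matrix n n 𝕜} (hA : A.PosSemidef) : ∃ b : n → EuclideanSpace 𝕜 n, A = gram 𝕜 b := by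
  classical
  open scoped MatrixOrder in
  obtain ⟨B, rfl⟩ := CStarAlgebra.nonneg_iff_eq_star_mul_self.mp hA.nonneg
  refine ⟨fun j => WithLp.toLp 2 fun i => B i j, Matrix.ext fun j k => ?_⟩
  simp [Matrix.mul_apply, PiLp.inner_apply, mul_comm]

theorem Matrix.PosDef.rank_mul_mul_conjTranspose {𝕜 m n : Type*} [RCLike 𝕜] [Fintype m]
    [Fintype n] [DecidableEq n] {D : Matrix n n 𝕜} (hD : D.PosDef) (A : Matrix m n 𝕜) :
    (A * D * Aᴴ).rank = A.rank := by
  open scoped MatrixOrder in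
  obtain ⟨C, rfl⟩ := CStarAlgebra.nonneg_iff_eq_star_mul_self.mp hD.posSemidef.nonneg
  have hC : IsUnit Cᴴ.det := by
    have h := (isUnit_iff_isUnit_det _).mp hD.isUnit
    rw [star_eq_conjTranspose, det_mul] at h
    exact isUnit_of_mul_isUnit_left h
  have hAC : C * Aᴴ = (A * Cᴴ)ᴴ := by rw [conjTranspose_mul, conjTranspose_conjTranspose]
  rw [star_eq_conjTranspose, ← Matrix.mul_assoc, Matrix.mul_assoc (A * Cᴴ), hAC,
    rank_self_mul_conjTranspose, rank_mul_eq_left_of_isUnit_det _ _ hC]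

theorem Matrix.rank_of_pow_of_injective {K : Type*} [Field K] {m N : ℕ} (hmN : m ≤ N)
    {z : Fin m → K} (hz : Function.Injective z) :
    (Matrix.of fun (j : Fin N) (l : Fin m) => z l ^ (j : ℕ)).rank = m := by
  refine le_antisymm ((rank_le_card_width _).trans_eq (Fintype.card_fin m)) ?_
  have hV : (Matrix.of fun (j : Fin N) (l : Fin m) => z l ^ (j : ℕ)).submatrix (Fin.castLE hmN) id
      = (vandermonde z)ᵀ := by
    ext
    simp [vandermonde]
  have hunit : IsUnit (vandermonde z)ᵀ := by
    rw [isUnit_iff_isUnit_det, det_transpose, isUnit_iff_ne_zero, det_vandermonde_ne_zero_iff]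
    exact hz
  calc m = ((vandermonde z)ᵀ).rank := by rw [rank_of_isUnit _ hunit, Fintype.card_fin]
    _ ≤ _ := hV ▸ rank_submatrix_le _ _ _

theorem Complex.zpow_sub_natCast_of_norm_eq_one {z : ℂ} (hz : ‖z‖ = 1) (j k : ℕ) :
    z ^ ((j : ℤ) - k) = z ^ j * starRingEnd ℂ z ^ k := by
  rw [zpow_sub₀ (norm_ne_zero_iff.mp (hz ▸ one_ne_zero)), zpow_natCast, zpow_natCast,
    div_eq_mul_inv, ← inv_pow, Complex.inv_eq_conj hz]

theorem caratheodory_fejer_decomposition_general (n r : ℕ)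
    (T : Matrix (Fin (n + 1)) (Fin (n + 1)) ℂ)
    (hT : T.PosSemidef)
    (hToeplitz : ∀ j k j' k' : Fin (n + 1),
      (j : ℤ) - (k : ℤ) = (j' : ℤ) - (k' : ℤ) → T j k = T j' k')
    (hrank : T.rank = r) :
    ∃ (z : Fin r → ℂ) (p : Fin r → ℝ),
      Function.Injective z ∧
      (∀ l, ‖z l‖ = 1) ∧
      (∀ l, 0 < p l) ∧
      (∀ j k : Fin (n + 1), T j k = ∑ l : Fin r, (p l : ℂ) * z l ^ ((j : ℤ) - (k : ℤ))) ∧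
      T = (Matrix.of fun (j : Fin (n + 1)) (l : Fin r) => z l ^ (j : ℕ)) *
            Matrix.diagonal (fun l => (p l : ℂ)) *
            (Matrix.of fun (j : Fin (n + 1)) (l : Fin r) => z l ^ (j : ℕ))ᴴ := by
  obtain ⟨b, rfl⟩ := hT.exists_eq_gram
  obtain ⟨U, hU⟩ := exists_linearIsometry_apply_eq_of_inner_eq (𝕜 := ℂ)
    (fun j : Fin n => b j.castSucc) (fun j => b j.succ) fun i j => hToeplitz _ _ _ _ (by simp)
  have hb : ∀ j : Fin (n + 1), b j = (U.toLinearMap ^ (j : ℕ)) (b 0) := by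
    refine Fin.induction rfl fun j ih => ?_
    rw [← hU, Fin.val_succ, pow_succ', Module.End.mul_apply, ih, Fin.val_castSucc]
    rfl
  obtain ⟨m, z, p, hm, hz, hz1, hp, hsum⟩ := U.exists_inner_pow_apply_eq_sum (b 0)
  have hentry : ∀ j k, gram ℂ b j k =
      ∑ l, (p l : ℂ) * z l ^ (j : ℕ) * starRingEnd ℂ (z l) ^ (k : ℕ) := fun j k => by
    rw [gram_apply, hb j, hb k, hsum]
  have hfactor : gram ℂ b = (Matrix.of fun (j : Fin (n + 1)) (l : Fin m) => z l ^ (j : ℕ)) *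
      diagonal (fun l => (p l : ℂ)) *
      (Matrix.of fun (j : Fin (n + 1)) (l : Fin m) => z l ^ (j : ℕ))ᴴ := by
    ext j k
    rw [hentry, Matrix.mul_apply]
    refine Finset.sum_congr rfl fun l _ => ?_
    simp only [mul_diagonal, of_apply, conjTranspose_apply, RCLike.star_def, map_pow]
    ring
  obtain rfl : m = r := by
    have hP : (diagonal fun l => (p l : ℂ)).PosDef :=
      posDef_diagonal_iff.mpr fun l => by exact_mod_cast hp l
    rw [← hrank, hfactor, hP.rank_mul_mul_conjTranspose,
      rank_of_pow_of_injective (by simpa using hm) hz]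
  refine ⟨z, p, hz, hz1, hp, fun j k => ?_, hfactor⟩
  simp only [hentry, Complex.zpow_sub_natCast_of_norm_eq_one (hz1 _), mul_assoc]

theorem caratheodory_fejer_decomposition (n r : ℕ) (hr : r ≤ n)
    (T : Matrix (Fin (n + 1)) (Fin (n + 1)) ℂ)
    (hT : T.PosSemidef)
    (hToeplitz : ∀ j k j' k' : Fin (n + 1),
      (j : ℤ) - (k : ℤ) = (j' : ℤ) - (k' : ℤ) → T j k = T j' k')
    (hrank : T.rank = r) :
    ∃ (z : Fin r → ℂ) (p : Fin r → ℝ),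
      Function.Injective z ∧
      (∀ l, ‖z l‖ = 1) ∧
      (∀ l, 0 < p l) ∧
      (∀ j k : Fin (n + 1), T j k = ∑ l : Fin r, (p l : ℂ) * z l ^ ((j : ℤ) - (k : ℤ))) ∧
      T = (Matrix.of fun (j : Fin (n + 1)) (l : Fin r) => z l ^ (j : ℕ)) *
            Matrix.diagonal (fun l => (p l : ℂ)) *
            (Matrix.of fun (j : Fin (n + 1)) (l : Fin r) => z l ^ (j : ℕ))ᴴ :=
  caratheodory_fejer_decomposition_general n r T hT hToeplitz hrank
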